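/- With the Walsh Dirichlet kernels D_m(x) = ∑_{k=0}^{m-1} w_k(x), set l_N := ∑_{k=1}^{N-1} 1/k, and define the Nörlund logarithmic kernel P_N(x) := (1/l_N)·∑_{k=1}^{N-1} D_k(x)/(N−k) and the Riesz logarithmic kernel Y_N(x) := (1/l_N)·∑_{k=1}^{N-1} D_k(x)/k. Then for every n ≥ 1 and every x : ℕ → ZMod 2, P_{2^n}(x) = D_{2^n}(x) − w_{2^n − 1}(x) · Y_{2^n}(x). -/

import Mathlib

/-!
Reflecting `k ↦ 2^n - k` turns the Nörlund sum into `∑ D_{2^n-k}/k`. For `j < 2^n` the index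
`2^n - 1 - j` is `(2^n - 1) xor j`, and Walsh functions are multiplicative under `xor`, so the
top `k` terms of `D_{2^n}` add up to `w_{2^n-1} D_k`, i.e. `D_{2^n-k} = D_{2^n} - w_{2^n-1} D_k`.
Dividing by `k` and summing, the `D_{2^n}` part reproduces the normalizing sum `l_{2^n}`.
-/

/-- Walsh–Paley function on the dyadic group, as an integer-valued function. -/
def walsh (k : ℕ) (x : ℕ → ZMod 2) : ℤ :=
  (-1) ^ (∑ i ∈ Finset.range k.size, (if k.testBit i then 1 else 0) * (x i).val)

/-- Walsh–Dirichlet kernel `D_m = ∑_{k<m} w_k`. -/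
def walshDirichlet (m : ℕ) (x : ℕ → ZMod 2) : ℤ :=
  ∑ k ∈ Finset.range m, walsh k x

open Finset

theorem Finset.sum_Icc_one_sub_one_reflect {M : Type*} [AddCommMonoid M] (f : ℕ → M) (N : ℕ) :
    ∑ k ∈ Icc 1 (N - 1), f (N - k) = ∑ k ∈ Icc 1 (N - 1), f k :=
  sum_nbij' (N - ·) (N - ·) (by simp only [mem_Icc]; omega) (by simp only [mem_Icc]; omega)
    (by simp only [mem_Icc]; omega) (by simp only [mem_Icc]; omega) fun _ _ => rfl

theorem Nat.two_pow_sub_one_sub_eq_xor {n j : ℕ} (hj : j < 2 ^ n) :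
    2 ^ n - 1 - j = (2 ^ n - 1) ^^^ j :=
  Nat.eq_of_testBit_eq fun i => by
    rw [Nat.sub_sub, Nat.add_comm, Nat.testBit_two_pow_sub_succ hj, Nat.testBit_xor,
      Nat.testBit_two_pow_sub_one]
    rcases lt_or_ge i n with hi | hi
    · simp [hi]
    · simp [not_lt.2 hi, Nat.testBit_eq_false_of_lt (hj.trans_le (Nat.pow_le_pow_right two_pos hi))]

theorem walsh_eq_of_lt_two_pow {k m : ℕ} (hk : k < 2 ^ m) (x : ℕ → ZMod 2) :
    walsh k x = (-1) ^ (∑ i ∈ range m, (if k.testBit i then 1 else 0) * (x i).val) := by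
  refine congrArg _ (sum_subset (fun i hi => ?_) fun i _ hi => ?_)
  · exact mem_range.2 ((mem_range.1 hi).trans_le (Nat.size_le.2 hk))
  · simp [Nat.testBit_eq_false_of_lt ((Nat.lt_size_self k).trans_le
      (Nat.pow_le_pow_right two_pos (not_lt.1 (mem_range.not.1 hi))))]

theorem walsh_xor (a b : ℕ) (x : ℕ → ZMod 2) :
    walsh (a ^^^ b) x = walsh a x * walsh b x := by
  have ha : a < 2 ^ (a.size + b.size) :=
    (Nat.lt_size_self a).trans_le (Nat.pow_le_pow_right two_pos (Nat.le_add_right _ _))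
  have hb : b < 2 ^ (a.size + b.size) :=
    (Nat.lt_size_self b).trans_le (Nat.pow_le_pow_right two_pos (Nat.le_add_left _ _))
  rw [walsh_eq_of_lt_two_pow (Nat.xor_lt_two_pow ha hb), walsh_eq_of_lt_two_pow ha,
    walsh_eq_of_lt_two_pow hb, ← pow_add, ← sum_add_distrib]
  -- the exponents differ by twice the number of common bits
  have hbits : ∀ i, (if a.testBit i then 1 else 0) * (x i).val +
      (if b.testBit i then 1 else 0) * (x i).val =
      (if (a ^^^ b).testBit i then 1 else 0) * (x i).val +
        2 * ((if a.testBit i && b.testBit i then 1 else 0) * (x i).val) := by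
    intro i
    rw [Nat.testBit_xor]
    cases a.testBit i <;> cases b.testBit i <;> simp only [Bool.false_and, Bool.true_and,
      Bool.bne_false, Bool.false_bne, bne_self_eq_false,
      if_true, if_false, Bool.false_eq_true] <;> ring
  rw [sum_congr rfl fun i _ => hbits i, sum_add_distrib, ← mul_sum, pow_add, pow_mul]
  norm_num

theorem walsh_two_pow_sub_one_sub {n j : ℕ} (hj : j < 2 ^ n) (x : ℕ → ZMod 2) :
    walsh (2 ^ n - 1 - j) x = walsh (2 ^ n - 1) x * walsh j x := by
  rw [Nat.two_pow_sub_one_sub_eq_xor hj, walsh_xor]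

theorem walshDirichlet_two_pow_sub {n k : ℕ} (hk : k ≤ 2 ^ n) (x : ℕ → ZMod 2) :
    walshDirichlet (2 ^ n - k) x =
      walshDirichlet (2 ^ n) x - walsh (2 ^ n - 1) x * walshDirichlet k x := by
  have hsplit : walshDirichlet (2 ^ n) x =
      walshDirichlet (2 ^ n - k) x + ∑ j ∈ Ico (2 ^ n - k) (2 ^ n), walsh j x :=
    (sum_range_add_sum_Ico _ (Nat.sub_le _ _)).symm
  have htail : ∑ j ∈ Ico (2 ^ n - k) (2 ^ n), walsh j x =
      walsh (2 ^ n - 1) x * walshDirichlet k x := by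
    calc ∑ j ∈ Ico (2 ^ n - k) (2 ^ n), walsh j x
        = ∑ j ∈ range k, walsh (2 ^ n - 1 - j) x := by
          rw [range_eq_Ico, sum_Ico_reflect (fun j => walsh j x) 0 (n := 2 ^ n - 1) (by omega),
            Nat.sub_add_cancel Nat.one_le_two_pow, Nat.sub_zero]
      _ = ∑ j ∈ range k, walsh (2 ^ n - 1) x * walsh j x :=
          sum_congr rfl fun j hj => walsh_two_pow_sub_one_sub ((mem_range.1 hj).trans_le hk) x
      _ = walsh (2 ^ n - 1) x * walshDirichlet k x := (mul_sum _ _ _).symm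
  rw [hsplit, htail]
  ring

theorem norlund_log_kernel_eq (n : ℕ) (hn : 1 ≤ n) (x : ℕ → ZMod 2) :
    (1 / ∑ k ∈ Finset.Icc 1 (2^n - 1 : ℕ), (1 : ℝ) / (k : ℝ)) *
        ∑ k ∈ Finset.Icc 1 (2^n - 1 : ℕ), (walshDirichlet k x : ℝ) / ((2^n : ℝ) - (k : ℝ)) =
      (walshDirichlet (2^n) x : ℝ) -
        (walsh (2^n - 1) x : ℝ) *
          ((1 / ∑ k ∈ Finset.Icc 1 (2^n - 1 : ℕ), (1 : ℝ) / (k : ℝ)) *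
            ∑ k ∈ Finset.Icc 1 (2^n - 1 : ℕ), (walshDirichlet k x : ℝ) / (k : ℝ)) := by
  have hlog : ∑ k ∈ Icc 1 (2 ^ n - 1 : ℕ), (1 : ℝ) / k ≠ 0 := by
    refine (sum_pos (fun k hk => one_div_pos.2 ?_) ⟨1, mem_Icc.2 ⟨le_rfl, ?_⟩⟩).ne'
    · exact_mod_cast (mem_Icc.1 hk).1
    · have := Nat.one_lt_two_pow (n := n) (by omega)
      omega
  have hreflect : ∑ k ∈ Icc 1 (2 ^ n - 1 : ℕ), (walshDirichlet k x : ℝ) / ((2 ^ n : ℝ) - k) =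
      ∑ k ∈ Icc 1 (2 ^ n - 1 : ℕ), ((walshDirichlet (2 ^ n) x : ℝ) * (1 / k) -
        walsh (2 ^ n - 1) x * ((walshDirichlet k x : ℝ) / k)) := by
    rw [← sum_Icc_one_sub_one_reflect]
    refine sum_congr rfl fun k hk => ?_
    have hk : k ≤ 2 ^ n := (mem_Icc.1 hk).2.trans (Nat.sub_le _ _)
    rw [walshDirichlet_two_pow_sub hk, Nat.cast_sub hk]
    push_cast
    ring
  rw [hreflect, sum_sub_distrib, ← mul_sum, ← mul_sum, mul_sub, mul_left_comm, one_div_mul_cancel hlog, mul_one, mul_left_comm]
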